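/- Let q = 3ⁿ with n odd, and let K be a finite field with q² elements with F its subfield of order q. Fix ξ ∈ K \ F and write each x ∈ K uniquely as x = x₀ + x₁ξ with x₀, x₁ ∈ F. Define f : K → K by f(x₀ + x₁ξ) = (x₀² + x₁¹⁰) + (2x₀x₁ + x₁⁶)ξ (the planar function of a Ganley semifield). Then for all a, b ∈ K the number of x ∈ K with f(x+a) − b ∈ ξF equals 1 if b ∈ ξF and equals q+1 if b ∉ ξF; hence U_ξ = {(x, tξ) : x ∈ K, t ∈ F} ∪ {(∞)} is a unital in the Ganley semifield plane Π(f). -/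

import Mathlib

/-- The point set of the shift plane `Π(f)`: affine points `(x,y)`, points at
infinity `(a)` for `a ∈ K`, and the point `(∞)`. -/
abbrev ShiftPt (K : Type) : Type := (K × K) ⊕ (K ⊕ Unit)

/-- The affine line `L_{a,b} = {(x, f(x+a) − b) : x ∈ K} ∪ {(a)}` of the shift plane. -/
def affLine (K : Type) [Field K] (f : K → K) (a b : K) : Set (ShiftPt K) :=
  {P | (∃ x : K, P = Sum.inl (x, f (x + a) - b)) ∨ P = Sum.inr (Sum.inl a)}

/-- The vertical line `N_a = {(a,y) : y ∈ K} ∪ {(∞)}` of the shift plane. -/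
def vertLine (K : Type) [Field K] (a : K) : Set (ShiftPt K) :=
  {P | (∃ y : K, P = Sum.inl (a, y)) ∨ P = Sum.inr (Sum.inr ())}

/-- The line at infinity of the shift plane. -/
def lineAtInf (K : Type) : Set (ShiftPt K) :=
  {P | ∃ s : K ⊕ Unit, P = Sum.inr s}

/-- The set of all lines of the shift plane `Π(f)`. -/
def shiftLines (K : Type) [Field K] (f : K → K) : Set (Set (ShiftPt K)) :=
  {L | (∃ a b : K, L = affLine K f a b) ∨ (∃ a : K, L = vertLine K a) ∨ L = lineAtInf K}

/-- The set `θF = {tθ : t ∈ F}`, where `F = {t : t^q = t}` is the subfield of order `q`. -/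
def scalarSet (K : Type) [Field K] (q : ℕ) (θ : K) : Set K :=
  {c | ∃ t : K, t ^ q = t ∧ c = t * θ}

/-- The point set `U_θ = {(x, tθ) : x ∈ K, t ∈ F} ∪ {(∞)}`. -/
def unitalSet (K : Type) [Field K] (q : ℕ) (θ : K) : Set (ShiftPt K) :=
  {P | (∃ x t : K, t ^ q = t ∧ P = Sum.inl (x, t * θ)) ∨ P = Sum.inr (Sum.inr ())}

/-!
Let `F` be the fixed field of `x ↦ x ^ q` and write `x = s + tξ`, `b = b₀ + b₁ξ` with
`s, t, b₀, b₁ ∈ F`. The first coordinate of `f(x) − b` is `s² + t¹⁰ − b₀`, so `f(x) − b ∈ ξF`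
exactly when `s² + t¹⁰ = b₀`. As `n` is odd, `5 ∤ q − 1`, so `t ↦ t⁵` permutes `F` and we may
count solutions of `s² + u² = b₀` instead. Also `q ≡ 3 (mod 4)`, so `K = F(i)` with `i² = −1`,
and `s² + u²` is the norm `z ^ (q + 1)` of `z = s + ui`. In the cyclic group `Kˣ` of order
`q² − 1`, the map `z ↦ z ^ (q + 1)` has kernel of order `q + 1` and image `Fˣ`, so the count is
`1` for `b₀ = 0` and `q + 1` otherwise. A vertical line meets `U_ξ` in the `q` points
`(a, tξ)` and `(∞)`, the line at infinity only in `(∞)`.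
-/

theorem Nat.three_pow_mod_four_of_odd {n : ℕ} (hn : Odd n) : 3 ^ n % 4 = 3 := by
  obtain ⟨k, rfl⟩ := hn
  rw [pow_succ, pow_mul, Nat.mul_mod, Nat.pow_mod]
  norm_num

theorem Nat.coprime_three_pow_sub_one_five_of_odd {n : ℕ} (hn : Odd n) :
    (3 ^ n - 1).Coprime 5 := by
  refine ((Nat.Prime.coprime_iff_not_dvd (by norm_num)).mpr ?_).symm
  have h : 3 ^ n % 5 = 3 ∨ 3 ^ n % 5 = 2 := by
    obtain ⟨k, rfl⟩ := hn
    rcases Nat.even_or_odd' k with ⟨m, rfl | rfl⟩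
    · left
      rw [show 2 * (2 * m) + 1 = 4 * m + 1 by ring, pow_succ, pow_mul, Nat.mul_mod, Nat.pow_mod]
      norm_num
    · right
      rw [show 2 * (2 * m + 1) + 1 = 4 * m + 3 by ring, pow_add, pow_mul, Nat.mul_mod,
        Nat.pow_mod]
      norm_num
  have : 0 < 3 ^ n := by positivity
  omega

theorem pow_bijective_of_coprime {L : Type*} [Field L] [Finite L] {d : ℕ}
    (hd : (Nat.card L - 1).Coprime d) (hd0 : d ≠ 0) : Function.Bijective fun x : L => x ^ d := by
  refine Finite.injective_iff_bijective.mp fun x y hxy => ?_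
  have hzero {x y : L} (hxy : x ^ d = y ^ d) (hx : x = 0) : y = 0 := by
    rwa [hx, zero_pow hd0, eq_comm, pow_eq_zero_iff hd0] at hxy
  obtain rfl | hx := eq_or_ne x 0
  · exact (hzero hxy rfl).symm
  obtain rfl | hy := eq_or_ne y 0
  · exact hzero hxy.symm rfl
  have hunits : (Nat.card Lˣ).Coprime d := Nat.card_units L ▸ hd
  exact congrArg Units.val <| hunits.pow_left_bijective.injective
    (a₁ := Units.mk0 x hx) (a₂ := Units.mk0 y hy) (Units.ext hxy)

theorem add_mul_injective_of_notMem {K : Type*} [Field K] {F : Subfield K} {θ : K} (hθ : θ ∉ F) :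
    Function.Injective fun p : F × F => (p.1 : K) + p.2 * θ := by
  rintro ⟨s, t⟩ ⟨s', t'⟩ h
  obtain rfl | ht := eq_or_ne t t'
  · simpa using h
  · refine absurd ?_ hθ
    have ht' : (t' - t : K) ≠ 0 := sub_ne_zero.mpr (by exact_mod_cast ht.symm)
    have : θ = (s - s' : K) / (t' - t) := by
      rw [eq_div_iff ht']
      linear_combination (exp := 1) -h
    exact this ▸ div_mem (sub_mem s.2 s'.2) (sub_mem t'.2 t.2)

section Norm

variable {K : Type*} [Field K] [Fintype K] {q : ℕ}

theorem natCard_units_pow_succ_eq (hcard : Fintype.card K = q ^ 2) {c : Kˣ}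
    (hc : (c : K) ^ q = c) : Nat.card {u : Kˣ // u ^ (q + 1) = c} = q + 1 := by
  have hq : 1 ≤ q := Nat.one_le_iff_ne_zero.mpr <| by rintro rfl; simp at hcard
  have hG : Nat.card Kˣ = (q + 1) * (q - 1) := by
    rw [Nat.card_units, Nat.card_eq_fintype_card, hcard, ← Nat.sq_sub_sq, one_pow]
  set N : Kˣ →* Kˣ := powMonoidHom (q + 1)
  set M : Kˣ →* Kˣ := powMonoidHom (q - 1)
  have hN : N.range = M.ker := by
    refine Subgroup.eq_of_le_of_card_ge ?_ ?_
    · rintro _ ⟨u, rfl⟩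
      rw [MonoidHom.mem_ker, powMonoidHom_apply, powMonoidHom_apply, ← pow_mul, ← hG,
        pow_card_eq_one']
    · rw [IsCyclic.card_powMonoidHom_ker, IsCyclic.card_powMonoidHom_range, hG,
        Nat.gcd_mul_left_left, Nat.gcd_mul_right_left, Nat.mul_div_cancel_left _ (Nat.succ_pos q)]
  have hcM : c ∈ M.ker := by
    rw [MonoidHom.mem_ker, powMonoidHom_apply, ← mul_left_inj c, ← pow_succ,
      Nat.sub_add_cancel hq, one_mul, Units.ext_iff, Units.val_pow_eq_pow_val, hc]
  obtain ⟨v, rfl⟩ := hN ▸ hcM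
  calc Nat.card {u : Kˣ // u ^ (q + 1) = N v}
      = Nat.card N.ker := Nat.card_congr (N.fiberEquivKer v)
    _ = q + 1 := by rw [IsCyclic.card_powMonoidHom_ker, hG, Nat.gcd_mul_right_left]

theorem natCard_pow_succ_eq (hcard : Fintype.card K = q ^ 2) {c : K} (hc : c ^ q = c)
    (hc0 : c ≠ 0) : Nat.card {z : K // z ^ (q + 1) = c} = q + 1 := by
  have hz0 {z : K} (hz : z ^ (q + 1) = c) : z ≠ 0 :=
    fun h => hc0 <| by rw [← hz, h, zero_pow q.succ_ne_zero]
  let e : {z : K // z ^ (q + 1) = c} ≃ {u : Kˣ // u ^ (q + 1) = Units.mk0 c hc0} :=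
    { toFun z := ⟨Units.mk0 z.1 (hz0 z.2), Units.ext <| by simp [z.2]⟩
      invFun u := ⟨u.1, by simpa using congrArg Units.val u.2⟩
      left_inv _ := rfl
      right_inv _ := Subtype.ext <| Units.ext rfl }
  exact (Nat.card_congr e).trans (natCard_units_pow_succ_eq hcard hc)

end Norm

section FixedSubfield

variable {K : Type*} [Field K] [Fintype K] {q : ℕ}

theorem add_pow_of_card_eq_sq (hcard : Fintype.card K = q ^ 2) (x y : K) :
    (x + y) ^ q = x ^ q + y ^ q := by
  obtain ⟨p, _, k, hp, hpk⟩ := FiniteField.card' K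
  have : Fact p.Prime := ⟨hp⟩
  obtain ⟨i, -, rfl⟩ := (Nat.dvd_prime_pow hp).mp (hpk ▸ hcard ▸ dvd_pow_self q two_ne_zero)
  exact add_pow_char_pow x y p i

def relFrobenius (hcard : Fintype.card K = q ^ 2) : K →+* K where
  toFun x := x ^ q
  map_one' := one_pow q
  map_mul' x y := mul_pow x y q
  map_zero' := zero_pow <| by rintro rfl; simp at hcard
  map_add' := add_pow_of_card_eq_sq hcard

def fixedSubfield (hcard : Fintype.card K = q ^ 2) : Subfield K :=
  (relFrobenius hcard).eqLocusField (RingHom.id K)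

variable (hcard : Fintype.card K = q ^ 2)

theorem relFrobenius_apply (x : K) : relFrobenius hcard x = x ^ q := by rfl

theorem relFrobenius_relFrobenius (x : K) : relFrobenius hcard (relFrobenius hcard x) = x := by
  rw [relFrobenius_apply, relFrobenius_apply, ← pow_mul, ← sq, ← hcard, FiniteField.pow_card]

theorem mem_fixedSubfield {x : K} : x ∈ fixedSubfield hcard ↔ x ^ q = x := by rfl

variable {hcard}

/-- Cramer's rule for the conjugation `x ↦ x ^ q` gives the coordinates of `x` in the basis
`1, θ`: the second one is `(x ^ q - x) / (θ ^ q - θ)`. -/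
theorem add_mul_surjective_of_notMem {θ : K} (hθ : θ ∉ fixedSubfield hcard) :
    Function.Surjective
      fun p : fixedSubfield hcard × fixedSubfield hcard => (p.1 : K) + p.2 * θ := by
  intro x
  set φ := relFrobenius hcard
  have hφφ : ∀ y, φ (φ y) = y := relFrobenius_relFrobenius hcard
  have hθ' : φ θ - θ ≠ 0 := sub_ne_zero.mpr hθ
  set t := (φ x - x) / (φ θ - θ)
  have ht : φ t = t := by
    simp only [t, map_div₀, map_sub, hφφ]
    rw [← neg_sub (φ x), ← neg_sub (φ θ), neg_div_neg_eq]
  have hs : φ (x - t * θ) = x - t * θ := by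
    rw [map_sub, map_mul, ht]
    simp only [t]
    field_simp
    ring
  exact ⟨(⟨_, hs⟩, ⟨t, ht⟩), by simp⟩

noncomputable def coordEquiv {θ : K} (hθ : θ ∉ fixedSubfield hcard) :
    fixedSubfield hcard × fixedSubfield hcard ≃ K :=
  Equiv.ofBijective _ ⟨add_mul_injective_of_notMem hθ, add_mul_surjective_of_notMem hθ⟩

theorem coordEquiv_apply {θ : K} (hθ : θ ∉ fixedSubfield hcard) (p) :
    coordEquiv hθ p = (p.1 : K) + p.2 * θ := rfl

theorem natCard_fixedSubfield {θ : K} (hθ : θ ∉ fixedSubfield hcard) :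
    Nat.card (fixedSubfield hcard) = q := by
  have h := Nat.card_congr (coordEquiv hθ)
  rw [Nat.card_prod, Nat.card_eq_fintype_card (α := K), hcard, ← sq] at h
  exact Nat.pow_left_injective two_ne_zero h

theorem pow_eq_neg_of_sq_mem {θ : K} (hθ : θ ∉ fixedSubfield hcard)
    (hθ2 : θ ^ 2 ∈ fixedSubfield hcard) : θ ^ q = -θ := by
  rw [mem_fixedSubfield] at hθ hθ2
  have h : (θ ^ q + θ) * (θ ^ q - θ) = 0 := by
    rw [← sq_sub_sq, ← pow_mul, mul_comm, pow_mul, hθ2, sub_self]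
  exact eq_neg_of_add_eq_zero_left <| (mul_eq_zero.mp h).resolve_right (sub_ne_zero.mpr hθ)

theorem exists_sq_eq_neg_one_notMem (hq : q % 4 = 3) {θ : K} (hθ : θ ∉ fixedSubfield hcard) :
    ∃ i : K, i ∉ fixedSubfield hcard ∧ i ^ 2 = -1 := by
  have hK : IsSquare (-1 : K) := by
    rw [FiniteField.isSquare_neg_one_iff, hcard, Nat.pow_mod, hq]
    norm_num
  obtain ⟨i, hi⟩ := hK
  refine ⟨i, fun hiF => ?_, by rw [hi, sq]⟩
  have : Fintype (fixedSubfield hcard) := Fintype.ofFinite _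
  have hF : ¬IsSquare (-1 : fixedSubfield hcard) := by
    rw [FiniteField.isSquare_neg_one_iff, Fintype.card_eq_nat_card, natCard_fixedSubfield hθ, hq]
    exact fun h => h rfl
  exact hF ⟨⟨i, hiF⟩, Subtype.ext hi⟩

theorem add_mul_pow_succ_eq_sq_add_sq {i : K} (hi : i ∉ fixedSubfield hcard) (hi2 : i ^ 2 = -1)
    (s t : fixedSubfield hcard) : ((s : K) + t * i) ^ (q + 1) = s ^ 2 + t ^ 2 := by
  have hiq : i ^ q = -i := pow_eq_neg_of_sq_mem hi (hi2 ▸ neg_mem (one_mem _))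
  have hconj : ((s : K) + t * i) ^ q = s - t * i := by
    rw [add_pow_of_card_eq_sq hcard, mul_pow, (mem_fixedSubfield hcard).mp s.2,
      (mem_fixedSubfield hcard).mp t.2, hiq, mul_neg, sub_eq_add_neg]
  rw [pow_succ, hconj]
  linear_combination -(t : K) ^ 2 * hi2

theorem natCard_sq_add_sq_eq {i : K} (hi : i ∉ fixedSubfield hcard) (hi2 : i ^ 2 = -1)
    (c : fixedSubfield hcard) :
    Nat.card {p : fixedSubfield hcard × fixedSubfield hcard // p.1 ^ 2 + p.2 ^ 2 = c} =
      Nat.card {z : K // z ^ (q + 1) = c} :=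
  Nat.card_congr <| (coordEquiv hi).subtypeEquiv fun p => by
    rw [coordEquiv_apply, add_mul_pow_succ_eq_sq_add_sq hi hi2, ← Subtype.coe_inj]
    push_cast
    rfl

end FixedSubfield

theorem natCard_sq_add_pow_ten_eq {F : Type*} [Field F] [Finite F]
    (h5 : (Nat.card F - 1).Coprime 5) (c : F) :
    Nat.card {p : F × F // p.1 ^ 2 + p.2 ^ 10 = c} =
      Nat.card {p : F × F // p.1 ^ 2 + p.2 ^ 2 = c} :=
  Nat.card_congr <| ((Equiv.refl F).prodCongr
    (Equiv.ofBijective _ (pow_bijective_of_coprime h5 (by norm_num)))).subtypeEquiv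
      fun p => by simp [← pow_mul]

section Ganley

variable {K : Type} [Field K] [Fintype K] {q : ℕ} {hcard : Fintype.card K = q ^ 2} {ξ : K}
  (hξ : ξ ∉ fixedSubfield hcard) {f : K → K}
  (hf : ∀ x0 x1 : K, x0 ^ q = x0 → x1 ^ q = x1 →
      f (x0 + x1 * ξ) = (x0 ^ 2 + x1 ^ 10) + (2 * x0 * x1 + x1 ^ 6) * ξ)

theorem add_mul_mem_scalarSet_iff {θ : K} (hθ : θ ∉ fixedSubfield hcard)
    (s t : fixedSubfield hcard) : (s : K) + t * θ ∈ scalarSet K q θ ↔ s = 0 := by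
  constructor
  · rintro ⟨r, hr, h⟩
    exact congrArg Prod.fst <|
      add_mul_injective_of_notMem hθ (a₁ := (s, t)) (a₂ := (0, ⟨r, hr⟩)) (by simpa using h)
  · rintro rfl
    exact ⟨t, t.2, by simp⟩

include hξ hf

theorem ganley_sub_mem_scalarSet_iff (b p : fixedSubfield hcard × fixedSubfield hcard) :
    f (coordEquiv hξ p) - coordEquiv hξ b ∈ scalarSet K q ξ ↔ p.1 ^ 2 + p.2 ^ 10 = b.1 := by
  have h : f (coordEquiv hξ p) - coordEquiv hξ b =
      coordEquiv hξ (p.1 ^ 2 + p.2 ^ 10 - b.1, 2 * p.1 * p.2 + p.2 ^ 6 - b.2) := by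
    simp only [coordEquiv_apply, hf _ _ p.1.2 p.2.2]
    push_cast [show ((2 : fixedSubfield hcard) : K) = 2 from rfl]
    ring
  rw [h, coordEquiv_apply, add_mul_mem_scalarSet_iff hξ, sub_eq_zero]

theorem ncard_ganley_sub_mem_scalarSet (hq4 : q % 4 = 3) (hq5 : (q - 1).Coprime 5) (a : K)
    (b : fixedSubfield hcard × fixedSubfield hcard) :
    {x : K | f (x + a) - coordEquiv hξ b ∈ scalarSet K q ξ}.ncard =
      Nat.card {z : K // z ^ (q + 1) = b.1} := by
  obtain ⟨i, hi, hi2⟩ := exists_sq_eq_neg_one_notMem hq4 hξ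
  calc {x : K | f (x + a) - coordEquiv hξ b ∈ scalarSet K q ξ}.ncard
      = Nat.card {y : K // f y - coordEquiv hξ b ∈ scalarSet K q ξ} :=
        Nat.card_congr <| (Equiv.addRight a).subtypeEquiv fun _ => Iff.rfl
    _ = Nat.card {p : fixedSubfield hcard × fixedSubfield hcard // p.1 ^ 2 + p.2 ^ 10 = b.1} :=
        Nat.card_congr <| ((coordEquiv hξ).subtypeEquiv fun p =>
          (ganley_sub_mem_scalarSet_iff hξ hf b p).symm).symm
    _ = Nat.card {p : fixedSubfield hcard × fixedSubfield hcard // p.1 ^ 2 + p.2 ^ 2 = b.1} :=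
        natCard_sq_add_pow_ten_eq ((natCard_fixedSubfield hξ).symm ▸ hq5) _
    _ = Nat.card {z : K // z ^ (q + 1) = b.1} := natCard_sq_add_sq_eq hi hi2 _

end Ganley

section ShiftPlane

variable {K : Type} [Field K] {q : ℕ} {θ : K}

theorem affLine_inter_unitalSet (f : K → K) (a b : K) :
    affLine K f a b ∩ unitalSet K q θ =
      (fun x => Sum.inl (x, f (x + a) - b)) '' {x | f (x + a) - b ∈ scalarSet K q θ} := by
  ext P
  simp only [affLine, unitalSet, scalarSet, Set.mem_inter_iff, Set.mem_ofPred_eq, Set.mem_image]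
  constructor
  · rintro ⟨⟨x, rfl⟩ | rfl, ⟨x', t, ht, h⟩ | h⟩
    · simp only [Sum.inl.injEq, Prod.mk.injEq] at h
      exact ⟨x, ⟨t, ht, h.2⟩, rfl⟩
    all_goals simp at h
  · rintro ⟨x, ⟨t, ht, h⟩, rfl⟩
    exact ⟨.inl ⟨x, rfl⟩, .inl ⟨x, t, ht, by rw [h]⟩⟩

theorem vertLine_inter_unitalSet (a : K) :
    vertLine K a ∩ unitalSet K q θ =
      insert (Sum.inr (Sum.inr ())) ((fun t => Sum.inl (a, t * θ)) '' {t | t ^ q = t}) := by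
  ext P
  simp only [vertLine, unitalSet, Set.mem_inter_iff, Set.mem_ofPred_eq, Set.mem_insert_iff,
    Set.mem_image]
  constructor
  · rintro ⟨⟨y, rfl⟩ | rfl, ⟨x', t, ht, h⟩ | h⟩
    · simp only [Sum.inl.injEq, Prod.mk.injEq] at h
      exact .inr ⟨t, ht, by rw [h.2]⟩
    all_goals simp_all
  · rintro (rfl | ⟨t, ht, rfl⟩)
    · exact ⟨.inr rfl, .inr rfl⟩
    · exact ⟨.inl ⟨_, rfl⟩, .inl ⟨a, t, ht, rfl⟩⟩

theorem lineAtInf_inter_unitalSet : lineAtInf K ∩ unitalSet K q θ = {Sum.inr (Sum.inr ())} := by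
  ext P
  simp only [lineAtInf, unitalSet, Set.mem_inter_iff, Set.mem_ofPred_eq, Set.mem_singleton_iff]
  constructor
  · rintro ⟨⟨s, rfl⟩, ⟨x, t, -, h⟩ | h⟩
    · simp at h
    · exact h
  · rintro rfl
    exact ⟨⟨_, rfl⟩, .inr rfl⟩

theorem ncard_line_inter_unitalSet [Finite K] {f : K → K} (hθ : θ ≠ 0)
    (hF : {t : K | t ^ q = t}.ncard = q)
    (hf : ∀ a b, {x | f (x + a) - b ∈ scalarSet K q θ}.ncard = 1 ∨
      {x | f (x + a) - b ∈ scalarSet K q θ}.ncard = q + 1) :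
    ∀ L ∈ shiftLines K f,
      (L ∩ unitalSet K q θ).ncard = 1 ∨ (L ∩ unitalSet K q θ).ncard = q + 1 := by
  rintro L (⟨a, b, rfl⟩ | ⟨a, rfl⟩ | rfl)
  · rw [affLine_inter_unitalSet, Set.ncard_image_of_injective _ fun x y h => by simp_all]
    exact hf a b
  · rw [vertLine_inter_unitalSet, Set.ncard_insert_of_notMem (by simp),
      Set.ncard_image_of_injective _ fun s t h => by simpa [hθ] using h, hF]
    exact .inr rfl
  · rw [lineAtInf_inter_unitalSet, Set.ncard_singleton]
    exact .inl rfl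

end ShiftPlane

theorem stmt7_general (n q : ℕ) (hnodd : Odd n) (hq : q = 3 ^ n)
    (K : Type) [Field K] [Fintype K] (hcard : Fintype.card K = q ^ 2)
    (ξ : K) (hξ : ξ ^ q ≠ ξ)
    (f : K → K)
    (hf : ∀ x0 x1 : K, x0 ^ q = x0 → x1 ^ q = x1 →
      f (x0 + x1 * ξ) = (x0 ^ 2 + x1 ^ 10) + (2 * x0 * x1 + x1 ^ 6) * ξ) :
    (∀ a b : K,
      (b ∈ scalarSet K q ξ → {x : K | f (x + a) - b ∈ scalarSet K q ξ}.ncard = 1) ∧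
      (b ∉ scalarSet K q ξ → {x : K | f (x + a) - b ∈ scalarSet K q ξ}.ncard = q + 1)) ∧
    (∀ L ∈ shiftLines K f,
      (L ∩ unitalSet K q ξ).ncard = 1 ∨ (L ∩ unitalSet K q ξ).ncard = q + 1) := by
  have hξF : ξ ∉ fixedSubfield hcard := hξ
  have hq4 : q % 4 = 3 := hq ▸ Nat.three_pow_mod_four_of_odd hnodd
  have hq5 : (q - 1).Coprime 5 := hq ▸ Nat.coprime_three_pow_sub_one_five_of_odd hnodd
  have hpoints (a b : K) :
      (b ∈ scalarSet K q ξ → {x : K | f (x + a) - b ∈ scalarSet K q ξ}.ncard = 1) ∧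
      (b ∉ scalarSet K q ξ → {x : K | f (x + a) - b ∈ scalarSet K q ξ}.ncard = q + 1) := by
    obtain ⟨b, rfl⟩ := (coordEquiv hξF).surjective b
    rw [ncard_ganley_sub_mem_scalarSet hξF hf hq4 hq5, coordEquiv_apply,
      add_mul_mem_scalarSet_iff hξF]
    exact ⟨fun hb => by simp [hb],
      fun hb => natCard_pow_succ_eq hcard b.1.2 (by exact_mod_cast hb)⟩
  refine ⟨hpoints, ncard_line_inter_unitalSet (fun h => hξF (h ▸ zero_mem _))
    (natCard_fixedSubfield hξF) fun a b => ?_⟩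
  by_cases hb : b ∈ scalarSet K q ξ
  exacts [.inl ((hpoints a b).1 hb), .inr ((hpoints a b).2 hb)]

/-- Theorem 2.5 (c).  Let `q = 3ⁿ` with `n` odd, `ξ ∈ K \ F`, and
`f(x₀ + x₁ξ) = (x₀² + x₁¹⁰) + (2x₀x₁ + x₁⁶)ξ` (the planar function of a Ganley
semifield).  Then for all `a b` the number of `x` with `f(x+a) − b ∈ ξF` is `1`
if `b ∈ ξF` and `q+1` otherwise; hence `U_ξ` is a unital in `Π(f)`. -/
theorem stmt7 (n q : ℕ) (hn : 0 < n) (hnodd : Odd n) (hq : q = 3 ^ n)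
    (K : Type) [Field K] [Fintype K] (hcard : Fintype.card K = q ^ 2)
    (ξ : K) (hξ : ξ ^ q ≠ ξ)
    (f : K → K)
    (hf : ∀ x0 x1 : K, x0 ^ q = x0 → x1 ^ q = x1 →
      f (x0 + x1 * ξ) = (x0 ^ 2 + x1 ^ 10) + (2 * x0 * x1 + x1 ^ 6) * ξ) :
    (∀ a b : K,
      (b ∈ scalarSet K q ξ → {x : K | f (x + a) - b ∈ scalarSet K q ξ}.ncard = 1) ∧
      (b ∉ scalarSet K q ξ → {x : K | f (x + a) - b ∈ scalarSet K q ξ}.ncard = q + 1)) ∧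
    (∀ L ∈ shiftLines K f,
      (L ∩ unitalSet K q ξ).ncard = 1 ∨ (L ∩ unitalSet K q ξ).ncard = q + 1) :=
  stmt7_general n q hnodd hq K hcard ξ hξ f hf
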